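/- arXiv:1402.2042 — 12 statements merged into one kernel-verified Lean document; each statement's English description precedes it below -/
import Mathlib

section
/- (Lemma 6 on minimum node distance, node-to-node form.) Let n ≥ 2 and let X₁,…,Xₙ be independent random points, each uniformly distributed on the square [0,√n] × [0,√n] ⊆ ℝ² (a square of area n). Then for every ε > 0, the probability that there exist distinct indices i ≠ j with Euclidean distance ‖Xᵢ − Xⱼ‖ ≤ n^{−(1/2+ε)} is at most (π/2)·n^{−2ε}; equivalently, with probability at least 1 − (π/2)·n^{−2ε} the minimum distance between any two of the n points exceeds 1/n^{1/2+ε}. -/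
/-!
Union bound over the `n.choose 2` pairs `i < j`. For one pair, independence turns the
probability that `Xⱼ` lies in the closed `r`-ball around `Xᵢ` into the average over `Xᵢ` of
the mass that the uniform law gives to that ball, at most `π r² / n`. With
`r = n^{-(1/2+ε)}` this gives `(n² / 2) · π r² / n = (π / 2) · n^{-2ε}`.
-/

open MeasureTheory ProbabilityTheory Real

/-- The square `[0, √n] × [0, √n]` of area `n` in the Euclidean plane. -/
def networkSquare (n : ℕ) : Set (EuclideanSpace ℝ (Fin 2)) :=
  {x | ∀ i, x i ∈ Set.Icc (0 : ℝ) (Real.sqrt n)}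

open Metric
open scoped ENNReal

section Independence

variable {Ω : Type*} [MeasurableSpace Ω] {μ : Measure Ω}

theorem measure_dist_le_le_of_indepFun [IsProbabilityMeasure μ] {E : Type*} [PseudoMetricSpace E]
    [MeasurableSpace E] [BorelSpace E] [SecondCountableTopology E] {f g : Ω → E}
    (hf : AEMeasurable f μ) (hg : AEMeasurable g μ) (hfg : IndepFun f g μ) {r : ℝ} {c : ℝ≥0∞}
    (hc : ∀ x, μ.map g (closedBall x r) ≤ c) :
    μ {ω | dist (f ω) (g ω) ≤ r} ≤ c := by
  have hS : MeasurableSet {p : E × E | dist p.1 p.2 ≤ r} :=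
    measurableSet_le continuous_dist.measurable measurable_const
  have : IsProbabilityMeasure (μ.map f) := Measure.isProbabilityMeasure_map hf
  calc μ {ω | dist (f ω) (g ω) ≤ r}
      = (μ.map fun ω ↦ (f ω, g ω)) {p | dist p.1 p.2 ≤ r} :=
        (Measure.map_apply_of_aemeasurable (hf.prodMk hg) hS).symm
    _ = ∫⁻ x, μ.map g (closedBall x r) ∂μ.map f := by
        rw [(indepFun_iff_map_prod_eq_prod_map_map hf hg).mp hfg, Measure.prod_apply hS]
        simp only [Set.preimage_ofPred_eq, closedBall, dist_comm]
    _ ≤ ∫⁻ _, c ∂μ.map f := lintegral_mono hc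
    _ = c := by simp

theorem measure_exists_ne_le_choose_two_mul {ι : Type*} [Fintype ι] [LinearOrder ι]
    {A : ι → ι → Set Ω} (hA : ∀ i j, A i j = A j i) {c : ℝ≥0∞}
    (hc : ∀ i j, i < j → μ (A i j) ≤ c) :
    μ {ω | ∃ i j, i ≠ j ∧ ω ∈ A i j} ≤ (Fintype.card ι).choose 2 * c := by
  set pairs : Finset (ι × ι) := {p | p.1 < p.2}
  have hsub : {ω | ∃ i j, i ≠ j ∧ ω ∈ A i j} ⊆ ⋃ p ∈ pairs, A p.1 p.2 := by
    rintro ω ⟨i, j, hij, hω⟩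
    simp only [Set.mem_iUnion, exists_prop]
    rcases hij.lt_or_gt with h | h
    · exact ⟨(i, j), by simpa [pairs] using h, hω⟩
    · exact ⟨(j, i), by simpa [pairs] using h, hA i j ▸ hω⟩
  calc μ {ω | ∃ i j, i ≠ j ∧ ω ∈ A i j}
      ≤ ∑ p ∈ pairs, μ (A p.1 p.2) := (measure_mono hsub).trans (measure_biUnion_finset_le _ _)
    _ ≤ pairs.card * c := by
        simpa using Finset.sum_le_card_nsmul pairs _ c fun p hp ↦ hc _ _ (by simpa [pairs] using hp)
    _ = (Fintype.card ι).choose 2 * c := by rw [Fintype.card_product_filter_lt]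

end Independence

theorem volume_networkSquare (n : ℕ) : volume (networkSquare n) = n := by
  have h : networkSquare n =
      (MeasurableEquiv.toLp 2 (Fin 2 → ℝ)).symm ⁻¹' Set.univ.pi fun _ ↦ Set.Icc 0 √n := by
    ext x
    simp [networkSquare, Pi.le_def, forall_and]
  rw [h, (EuclideanSpace.volume_preserving_symm_measurableEquiv_toLp (Fin 2)).measure_preimage
    (MeasurableSet.univ_pi fun _ ↦ measurableSet_Icc).nullMeasurableSet, volume_pi_pi]
  simp [← ENNReal.ofReal_pow]

theorem isProbabilityMeasure_cond_networkSquare {n : ℕ} (hn : n ≠ 0) :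
    IsProbabilityMeasure volume[|networkSquare n] :=
  cond_isProbabilityMeasure_of_finite (by simp [volume_networkSquare, hn])
    (by simp [volume_networkSquare])

theorem cond_networkSquare_closedBall_le {n : ℕ} (hn : n ≠ 0) (x : EuclideanSpace ℝ (Fin 2))
    {r : ℝ} (hr : 0 ≤ r) :
    volume[closedBall x r | networkSquare n] ≤ ENNReal.ofReal (π * r ^ 2 / n) := by
  rw [cond_apply' measurableSet_closedBall, volume_networkSquare]
  calc (n : ℝ≥0∞)⁻¹ * volume (networkSquare n ∩ closedBall x r)
      ≤ (n : ℝ≥0∞)⁻¹ * volume (closedBall x r) := by gcongr; exact Set.inter_subset_right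
    _ = ENNReal.ofReal (π * r ^ 2 / n) := by
      rw [EuclideanSpace.volume_closedBall_fin_two, ENNReal.ofReal_div_of_pos (by positivity),
        ENNReal.ofReal_mul pi_pos.le, ENNReal.ofReal_pow hr, ENNReal.ofReal_natCast,
        ENNReal.div_eq_inv_mul, mul_comm (ENNReal.ofReal π)]

theorem choose_two_mul_pi_sq_div_le (n : ℕ) (ε : ℝ) :
    (n.choose 2 : ℝ) * (π * ((n : ℝ) ^ (-(1 / 2 + ε))) ^ 2 / n) ≤ π / 2 * n ^ (-(2 * ε)) := by
  rcases Nat.eq_zero_or_pos n with rfl | hn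
  · simp only [Nat.choose_zero_succ, Nat.cast_zero, zero_mul]
    positivity
  have hn' : (0 : ℝ) < n := by exact_mod_cast hn
  have hsq : (n : ℝ) * ((n : ℝ) ^ (-(1 / 2 + ε))) ^ 2 = n ^ (-(2 * ε)) := by
    rw [← rpow_mul_natCast hn'.le, mul_comm, ← rpow_add_one hn'.ne']
    ring_nf
  calc (n.choose 2 : ℝ) * (π * ((n : ℝ) ^ (-(1 / 2 + ε))) ^ 2 / n)
      ≤ n ^ 2 / 2 * (π * ((n : ℝ) ^ (-(1 / 2 + ε))) ^ 2 / n) := by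
        gcongr
        simpa using Nat.choose_le_pow_div (α := ℝ) 2 n
    _ = π / 2 * n ^ (-(2 * ε)) := by
        rw [← hsq]
        field_simp

theorem min_distance_lemma_general (n : ℕ)
    {Ω : Type*} [MeasurableSpace Ω] (μ : Measure Ω) [IsProbabilityMeasure μ]
    (X : Fin n → Ω → EuclideanSpace ℝ (Fin 2))
    (hindep : iIndepFun X μ)
    (hlaw : ∀ i, Measure.map (X i) μ =
      (volume (networkSquare n))⁻¹ • volume.restrict (networkSquare n))
    (ε : ℝ) :
    μ {ω | ∃ i j : Fin n, i ≠ j ∧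
        dist (X i ω) (X j ω) ≤ (n : ℝ) ^ (-(1 / 2 + ε) : ℝ)} ≤
      ENNReal.ofReal ((π / 2) * (n : ℝ) ^ (-(2 * ε) : ℝ)) := by
  set r := (n : ℝ) ^ (-(1 / 2 + ε))
  have hlaw : ∀ i, μ.map (X i) = volume[|networkSquare n] := hlaw
  have hpair : ∀ i j : Fin n, i < j →
      μ {ω | dist (X i ω) (X j ω) ≤ r} ≤ ENNReal.ofReal (π * r ^ 2 / n) := by
    intro i j hij
    have hn : n ≠ 0 := i.pos.ne'
    have := isProbabilityMeasure_cond_networkSquare hn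
    -- `Measure.map` sends every map that is not a.e.-measurable to `0`.
    have hX k : AEMeasurable (X k) μ := .of_map_ne_zero <| by
      rw [hlaw k]
      exact IsProbabilityMeasure.ne_zero _
    refine measure_dist_le_le_of_indepFun (hX i) (hX j) (hindep.indepFun hij.ne) fun x ↦ ?_
    rw [hlaw j]
    exact cond_networkSquare_closedBall_le hn x (by positivity)
  calc μ {ω | ∃ i j : Fin n, i ≠ j ∧ dist (X i ω) (X j ω) ≤ r}
      ≤ n.choose 2 * ENNReal.ofReal (π * r ^ 2 / n) := by
        simpa using measure_exists_ne_le_choose_two_mul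
          (A := fun i j ↦ {ω | dist (X i ω) (X j ω) ≤ r}) (fun i j ↦ by simp [dist_comm]) hpair
    _ = ENNReal.ofReal (n.choose 2 * (π * r ^ 2 / n)) := by
        rw [ENNReal.ofReal_mul (by positivity), ENNReal.ofReal_natCast]
    _ ≤ ENNReal.ofReal ((π / 2) * (n : ℝ) ^ (-(2 * ε))) :=
        ENNReal.ofReal_le_ofReal (choose_two_mul_pi_sq_div_le n ε)

/-- Lemma 6 (node-to-node form): if `n ≥ 2` points are placed independently and
uniformly on a square of area `n`, then for every `ε > 0` the probability that two
distinct points are within distance `n^{-(1/2+ε)}` of each other is at most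
`(π/2)·n^{-2ε}`. -/
theorem min_distance_lemma (n : ℕ) (hn : 2 ≤ n)
    {Ω : Type*} [MeasurableSpace Ω] (μ : Measure Ω) [IsProbabilityMeasure μ]
    (X : Fin n → Ω → EuclideanSpace ℝ (Fin 2)) (hmeas : ∀ i, Measurable (X i))
    (hindep : iIndepFun X μ)
    (hlaw : ∀ i, Measure.map (X i) μ =
      (volume (networkSquare n))⁻¹ • volume.restrict (networkSquare n))
    (ε : ℝ) (hε : 0 < ε) :
    μ {ω | ∃ i j : Fin n, i ≠ j ∧
        dist (X i ω) (X j ω) ≤ (n : ℝ) ^ (-(1 / 2 + ε) : ℝ)} ≤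
      ENNReal.ofReal ((π / 2) * (n : ℝ) ^ (-(2 * ε) : ℝ)) :=
  min_distance_lemma_general n μ X hindep hlaw ε
end

section
/- Let N, p, q be natural numbers, let H₁ be a p×N complex matrix, H₂ a q×N complex matrix, and Q an N×N complex positive semidefinite Hermitian matrix. Let H be the (p+q)×N matrix obtained by stacking H₁ on top of H₂. Then det(I_{p+q} + H Q H†), det(I_p + H₁ Q H₁†), and det(I_q + H₂ Q H₂†) are real numbers (each at least 1), and det(I_{p+q} + H Q H†) ≤ det(I_p + H₁ Q H₁†) · det(I_q + H₂ Q H₂†). -/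
/-!
Write `I + H Q Hᴴ` as the block matrix `[[A, B], [Bᴴ, D]]` with `A = I + H₁ Q H₁ᴴ`,
`D = I + H₂ Q H₂ᴴ`. The Schur complement gives `det (I + H Q Hᴴ) = det A * det (D - Bᴴ A⁻¹ B)`,
and `0 ≤ D - Bᴴ A⁻¹ B ≤ D` in the Loewner order, so Fischer's inequality follows from the
monotonicity of `det` on positive semidefinite matrices. That in turn reduces, after conjugating
by `D^(-1/2)`, to `det C ≤ 1` for `0 ≤ C ≤ 1`, where all eigenvalues lie in `[0, 1]`.
In the partial order of `ℂ`, `1 ≤ z` means that `z` is real and at least `1`.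
-/

open scoped ComplexOrder MatrixOrder
open Matrix

namespace Matrix

lemma one_add_fromRows_mul_mul_conjTranspose {m n k α : Type*} [Fintype k] [DecidableEq m]
    [DecidableEq n] [CommRing α] [StarRing α] (H₁ : Matrix m k α) (H₂ : Matrix n k α)
    {Q : Matrix k k α} (hQ : Q.IsHermitian) :
    1 + fromRows H₁ H₂ * Q * (fromRows H₁ H₂)ᴴ =
      fromBlocks (1 + H₁ * Q * H₁ᴴ) (H₁ * Q * H₂ᴴ) (H₁ * Q * H₂ᴴ)ᴴ (1 + H₂ * Q * H₂ᴴ) := by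
  rw [conjTranspose_fromRows_eq_fromCols_conjTranspose, fromRows_mul, fromRows_mul_fromCols,
    ← fromBlocks_one, fromBlocks_add]
  simp [conjTranspose_mul, hQ.eq, Matrix.mul_assoc]

variable {m n k 𝕜 : Type*} [Fintype m] [Fintype n] [Fintype k] [DecidableEq m] [DecidableEq n]
  [RCLike 𝕜]

lemma det_le_one_of_nonneg_of_le_one {C : Matrix n n 𝕜} (hC₀ : 0 ≤ C) (hC₁ : C ≤ 1) :
    C.det ≤ 1 := by
  have hC : C.PosSemidef := nonneg_iff_posSemidef.1 hC₀
  have heigenvalues_le_one (i : n) : hC.1.eigenvalues i ≤ 1 :=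
    (CFC.le_one_iff C).1 hC₁ _ (hC.1.eigenvalues_mem_spectrum_real i)
  rw [hC.1.det_eq_prod_eigenvalues, ← RCLike.ofReal_prod, ← RCLike.ofReal_one,
    RCLike.ofReal_le_ofReal]
  exact Finset.prod_le_one (fun i _ ↦ hC.eigenvalues_nonneg i) fun i _ ↦ heigenvalues_le_one i

lemma det_le_det_of_le {A B : Matrix n n 𝕜} (hA : 0 ≤ A) (hB : B.PosDef) (hAB : A ≤ B) :
    A.det ≤ B.det := by
  set S := CFC.sqrt B
  have hSS : S * S = B := CFC.sqrt_mul_sqrt_self B hB.posSemidef.nonneg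
  have hS_det : IsUnit S.det :=
    (isUnit_iff_isUnit_det S).1 (isStrictlyPositive_iff_posDef.2 hB).sqrt.isUnit
  have hS_inv_star : star S⁻¹ = S⁻¹ := (CFC.sqrt_nonneg B).posSemidef.inv.isHermitian
  have hS_inv_mul : S⁻¹ * S = 1 := nonsing_inv_mul S hS_det
  have hS_mul_inv : S * S⁻¹ = 1 := mul_nonsing_inv S hS_det
  set C := S⁻¹ * A * S⁻¹
  have hC₀ : 0 ≤ C := by simpa [C, hS_inv_star] using star_left_conjugate_nonneg hA S⁻¹
  have hC₁ : C ≤ 1 := by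
    have := star_left_conjugate_le_conjugate hAB S⁻¹
    rwa [hS_inv_star, ← hSS, ← mul_assoc, hS_inv_mul, one_mul, hS_mul_inv] at this
  have hA_eq : A = S * C * S := by
    simp only [C, ← mul_assoc, hS_mul_inv, one_mul]
    rw [mul_assoc, hS_inv_mul, mul_one]
  have hdet : A.det = C.det * B.det := by
    rw [hA_eq, det_mul, det_mul S C, ← hSS, det_mul S S]
    ring
  rw [hdet]
  exact mul_le_of_le_one_left hB.det_pos.le (det_le_one_of_nonneg_of_le_one hC₀ hC₁)

lemma PosSemidef.one_le_det_one_add {P : Matrix n n 𝕜} (hP : P.PosSemidef) :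
    1 ≤ (1 + P).det := by
  simpa using det_le_det_of_le PosSemidef.one.nonneg (PosDef.one.add_posSemidef hP)
    (le_add_of_nonneg_right hP.nonneg)

/-- **Fischer's inequality**. -/
lemma PosSemidef.det_fromBlocks_le {A : Matrix m m 𝕜} {B : Matrix m n 𝕜} {D : Matrix n n 𝕜}
    (hA : A.PosDef) (hD : D.PosDef) (hM : (fromBlocks A B Bᴴ D).PosSemidef) :
    (fromBlocks A B Bᴴ D).det ≤ A.det * D.det := by
  have : Invertible A := A.invertibleOfIsUnitDet (isUnit_iff_ne_zero.2 hA.det_pos.ne')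
  have hSchur : 0 ≤ D - Bᴴ * A⁻¹ * B := ((PosDef.fromBlocks₁₁ B D hA).1 hM).nonneg
  have hX : 0 ≤ Bᴴ * A⁻¹ * B := (hA.inv.posSemidef.conjTranspose_mul_mul_same B).nonneg
  rw [det_fromBlocks₁₁, invOf_eq_nonsing_inv]
  exact mul_le_mul_of_nonneg_left (det_le_det_of_le hSchur hD (sub_le_self _ hX)) hA.det_pos.le

lemma PosSemidef.det_one_add_fromRows_mul_mul_conjTranspose_le {Q : Matrix k k 𝕜}
    (hQ : Q.PosSemidef) (H₁ : Matrix m k 𝕜) (H₂ : Matrix n k 𝕜) :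
    (1 + fromRows H₁ H₂ * Q * (fromRows H₁ H₂)ᴴ).det ≤
      (1 + H₁ * Q * H₁ᴴ).det * (1 + H₂ * Q * H₂ᴴ).det := by
  have hM := PosSemidef.one.add (hQ.mul_mul_conjTranspose_same (fromRows H₁ H₂))
  rw [one_add_fromRows_mul_mul_conjTranspose H₁ H₂ hQ.1] at hM ⊢
  exact det_fromBlocks_le (PosDef.one.add_posSemidef (hQ.mul_mul_conjTranspose_same H₁))
    (PosDef.one.add_posSemidef (hQ.mul_mul_conjTranspose_same H₂)) hM

end Matrix

/-- Splitting of the MIMO cut-set log-determinant: for `H` obtained by stacking `H₁`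
on top of `H₂` and `Q` positive semidefinite, the determinants of `I + H Q H†`,
`I + H₁ Q H₁†`, and `I + H₂ Q H₂†` are real numbers at least `1`, and
`det(I + H Q H†) ≤ det(I + H₁ Q H₁†) · det(I + H₂ Q H₂†)`. -/
theorem det_one_add_stacked_mul_posSemidef_le (N p q : ℕ)
    (H₁ : Matrix (Fin p) (Fin N) ℂ) (H₂ : Matrix (Fin q) (Fin N) ℂ)
    (Q : Matrix (Fin N) (Fin N) ℂ) (hQ : Q.PosSemidef) :
    (1 + fromRows H₁ H₂ * Q * (fromRows H₁ H₂)ᴴ).det.im = 0 ∧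
    (1 + H₁ * Q * H₁ᴴ).det.im = 0 ∧
    (1 + H₂ * Q * H₂ᴴ).det.im = 0 ∧
    1 ≤ (1 + fromRows H₁ H₂ * Q * (fromRows H₁ H₂)ᴴ).det.re ∧
    1 ≤ (1 + H₁ * Q * H₁ᴴ).det.re ∧
    1 ≤ (1 + H₂ * Q * H₂ᴴ).det.re ∧
    (1 + fromRows H₁ H₂ * Q * (fromRows H₁ H₂)ᴴ).det.re ≤
      (1 + H₁ * Q * H₁ᴴ).det.re * (1 + H₂ * Q * H₂ᴴ).det.re := by
  have one_le {ι : Type} [Fintype ι] [DecidableEq ι] (H : Matrix ι (Fin N) ℂ) :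
      1 ≤ (1 + H * Q * Hᴴ).det :=
    (hQ.mul_mul_conjTranspose_same H).one_le_det_one_add
  obtain ⟨hM_re, hM_im⟩ := Complex.le_def.1 (one_le (fromRows H₁ H₂))
  obtain ⟨h₁_re, h₁_im⟩ := Complex.le_def.1 (one_le H₁)
  obtain ⟨h₂_re, h₂_im⟩ := Complex.le_def.1 (one_le H₂)
  refine ⟨hM_im.symm, h₁_im.symm, h₂_im.symm, hM_re, h₁_re, h₂_re, ?_⟩
  have hFischer := Complex.le_def.1 (hQ.det_one_add_fromRows_mul_mul_conjTranspose_le H₁ H₂)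
  simpa [Complex.mul_re, ← h₁_im] using hFischer.1
end

section
/- (Table I, Regime A.) Let α, β, γ be real numbers with α > 2, β, γ ∈ [0,1), and β + γ ≤ 1/2. Then E∞(α,β,γ) = max(1/2, 2 − α/2); in particular E∞(α,β,γ) = 2 − α/2 when 2 < α < 3 (hierarchical cooperation is best) and E∞(α,β,γ) = 1/2 when α ≥ 3 (multihop is best), so infrastructure does not improve the throughput scaling exponent in this regime. -/
/-- Throughput scaling exponent of the infrastructure-supported single-hop (ISH) protocol. -/
noncomputable def eISH (α β γ : ℝ) : ℝ := 1 + γ - α * (1 - β) / 2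

/-- Throughput scaling exponent of the infrastructure-supported multihop (IMH) protocol. -/
noncomputable def eIMH (β γ : ℝ) : ℝ := min (β + γ) ((1 + β) / 2)

/-- Achievable throughput scaling exponent with backhaul-rate exponent `η`. -/
noncomputable def Eexp (α β γ η : ℝ) : ℝ :=
  max (min (max (eISH α β γ) (eIMH β γ)) (β + η)) (max (1 / 2) (2 - α / 2))

/-- Achievable throughput scaling exponent with infinite-capacity backhaul. -/
noncomputable def Einf (α β γ : ℝ) : ℝ :=
  max (max (eISH α β γ) (eIMH β γ)) (max (1 / 2) (2 - α / 2))

/-- Table I, Regime A: with `β + γ ≤ 1/2`, infrastructure does not improve the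
throughput scaling exponent. -/
theorem regimeA_infinite_backhaul (α β γ : ℝ) (hα : 2 < α)
    (hβ : β ∈ Set.Ico (0 : ℝ) 1) (hγ : γ ∈ Set.Ico (0 : ℝ) 1)
    (hβγ : β + γ ≤ 1 / 2) :
    Einf α β γ = max (1 / 2) (2 - α / 2) ∧
    (α < 3 → Einf α β γ = 2 - α / 2) ∧
    (3 ≤ α → Einf α β γ = 1 / 2) := by
  obtain ⟨hβ0, hβ1⟩ := hβ
  obtain ⟨hγ0, hγ1⟩ := hγ
  have h1 : eISH α β γ ≤ 1/2 := by
    unfold eISH; nlinarith [mul_nonneg (by linarith : (0:ℝ) ≤ α - 2) (by linarith : (0:ℝ) ≤ 1 - β)]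
  have h2 : eIMH β γ ≤ 1/2 := le_trans (min_le_left _ _) hβγ
  have hmain : Einf α β γ = max (1/2) (2 - α/2) := by
    unfold Einf
    exact max_eq_right (le_trans (max_le h1 h2) (le_max_left _ _))
  refine ⟨hmain, fun h3 => ?_, fun h3 => ?_⟩
  · rw [hmain, max_eq_right (by linarith)]
  · rw [hmain, max_eq_left (by linarith)]
end

section
/- (Table I, Regime B.) Let α, β, γ be real numbers with α > 2, β, γ ∈ [0,1), β + γ ≥ 1/2, and β + 2γ ≤ 1. Then E∞(α,β,γ) = max(β + γ, 2 − α/2); in particular E∞(α,β,γ) = 2 − α/2 when 2 < α < 4 − 2β − 2γ (hierarchical cooperation is best) and E∞(α,β,γ) = β + γ when α ≥ 4 − 2β − 2γ (infrastructure-supported multihop is best). -/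
/-- Table I, Regime B. -/
theorem regimeB_infinite_backhaul (α β γ : ℝ) (hα : 2 < α)
    (hβ : β ∈ Set.Ico (0 : ℝ) 1) (hγ : γ ∈ Set.Ico (0 : ℝ) 1)
    (h1 : 1 / 2 ≤ β + γ) (h2 : β + 2 * γ ≤ 1) :
    Einf α β γ = max (β + γ) (2 - α / 2) ∧
    (α < 4 - 2 * β - 2 * γ → Einf α β γ = 2 - α / 2) ∧
    (4 - 2 * β - 2 * γ ≤ α → Einf α β γ = β + γ) := by
  obtain ⟨hβ0, hβ1⟩ := hβ
  obtain ⟨hγ0, hγ1⟩ := hγ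
  have hIMH : eIMH β γ = β + γ := by
    unfold eIMH; rw [min_eq_left]; linarith
  have hISH : eISH α β γ ≤ β + γ := by
    unfold eISH; nlinarith
  have hmain : Einf α β γ = max (β + γ) (2 - α / 2) := by
    unfold Einf
    rw [hIMH, max_eq_right hISH]
    rw [← max_assoc, max_eq_left h1]
  refine ⟨hmain, ?_, ?_⟩
  · intro h
    rw [hmain, max_eq_right]; linarith
  · intro h
    rw [hmain, max_eq_left]; linarith
end

section
/- (Table I, Regime C.) Let α, β, γ be real numbers with α > 2, β, γ ∈ [0,1), β + 2γ ≥ 1, and 2γ ≤ β² − 3β + 2. Then E∞(α,β,γ) = max((1+β)/2, 2 − α/2); in particular E∞(α,β,γ) = 2 − α/2 when 2 < α < 3 − β (hierarchical cooperation is best) and E∞(α,β,γ) = (1+β)/2 when α ≥ 3 − β (infrastructure-supported multihop is best). -/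
/-- Table I, Regime C. -/
theorem regimeC_infinite_backhaul (α β γ : ℝ) (hα : 2 < α)
    (hβ : β ∈ Set.Ico (0 : ℝ) 1) (hγ : γ ∈ Set.Ico (0 : ℝ) 1)
    (h1 : 1 ≤ β + 2 * γ) (h2 : 2 * γ ≤ β ^ 2 - 3 * β + 2) :
    Einf α β γ = max ((1 + β) / 2) (2 - α / 2) ∧
    (α < 3 - β → Einf α β γ = 2 - α / 2) ∧
    (3 - β ≤ α → Einf α β γ = (1 + β) / 2) := by
  obtain ⟨hβ0, hβ1⟩ := hβ
  obtain ⟨hγ0, hγ1⟩ := hγ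
  have hmin : eIMH β γ = (1 + β) / 2 := by unfold eIMH; exact min_eq_right (by linarith)
  have hISH : eISH α β γ ≤ max ((1 + β) / 2) (2 - α / 2) := by
    rcases le_or_gt (3 - β) α with h | h
    · exact le_trans (by unfold eISH; nlinarith) (le_max_left _ _)
    · exact le_trans (by unfold eISH; nlinarith) (le_max_right _ _)
  have hhalf : (1 : ℝ) / 2 ≤ (1 + β) / 2 := by linarith
  have hmain : Einf α β γ = max ((1 + β) / 2) (2 - α / 2) := by
    unfold Einf
    rw [hmin]
    apply le_antisymm
    · apply max_le
      · exact max_le hISH (le_max_left _ _)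
      · exact max_le (hhalf.trans (le_max_left _ _)) (le_max_right _ _)
    · exact max_le (le_trans (le_max_right _ _) (le_max_left _ _))
        (le_trans (le_max_right _ _) (le_max_right _ _))
  refine ⟨hmain, fun h => ?_, fun h => ?_⟩
  · rw [hmain]; exact max_eq_right (by linarith)
  · rw [hmain]; exact max_eq_left (by linarith)
end

section
/- (Table I, Regime D.) Let α, β, γ be real numbers with α > 2, β ∈ (0,1), γ ∈ [0,1), β + γ ≤ 1, and 2γ ≥ β² − 3β + 2. Then: (i) if α ≤ 2(1−γ)/β, then E∞(α,β,γ) = 2 − α/2 (hierarchical cooperation is best); (ii) if 2(1−γ)/β ≤ α ≤ 1 + 2γ/(1−β), then E∞(α,β,γ) = 1 + γ − α(1−β)/2 (infrastructure-supported single-hop is best); (iii) if α ≥ 1 + 2γ/(1−β), then E∞(α,β,γ) = (1+β)/2 (infrastructure-supported multihop is best). -/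
/-- Table I, Regime D. -/
theorem regimeD_infinite_backhaul (α β γ : ℝ) (hα : 2 < α)
    (hβ : β ∈ Set.Ioo (0 : ℝ) 1) (hγ : γ ∈ Set.Ico (0 : ℝ) 1)
    (h1 : β + γ ≤ 1) (h2 : β ^ 2 - 3 * β + 2 ≤ 2 * γ) :
    (α ≤ 2 * (1 - γ) / β → Einf α β γ = 2 - α / 2) ∧
    (2 * (1 - γ) / β ≤ α → α ≤ 1 + 2 * γ / (1 - β) →
      Einf α β γ = 1 + γ - α * (1 - β) / 2) ∧
    (1 + 2 * γ / (1 - β) ≤ α → Einf α β γ = (1 + β) / 2) := by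
  obtain ⟨hβ0, hβ1⟩ := hβ
  obtain ⟨hγ0, hγ1⟩ := hγ
  have h1β : (0:ℝ) < 1 - β := by linarith
  have hIMH : eIMH β γ = (1 + β) / 2 := by
    unfold eIMH
    rw [min_eq_right]
    nlinarith
  unfold Einf
  rw [hIMH]
  refine ⟨?_, ?_, ?_⟩
  · intro h
    have hab : α * β ≤ 2 * (1 - γ) := by rwa [le_div_iff₀ hβ0] at h
    have hα3 : α ≤ 3 - β := by nlinarith
    rw [max_eq_right (by linarith : (1:ℝ)/2 ≤ 2 - α/2),
        max_eq_right (max_le ?_ ?_)]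
    · unfold eISH; nlinarith
    · linarith
  · intro ha hb
    have ha' : 2 * (1 - γ) ≤ α * β := by rwa [div_le_iff₀ hβ0] at ha
    have hb' : (α - 1) * (1 - β) ≤ 2 * γ := (le_div_iff₀ h1β).mp (by linarith)
    have hISH : (1 + β) / 2 ≤ eISH α β γ := by unfold eISH; nlinarith
    have hISH2 : 2 - α / 2 ≤ eISH α β γ := by unfold eISH; nlinarith
    rw [max_eq_left hISH, max_eq_left (max_le (by unfold eISH at hISH ⊢; linarith) hISH2)]
    rfl
  · intro hc
    have hc' : 2 * γ ≤ (α - 1) * (1 - β) := (div_le_iff₀ h1β).mp (by linarith)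
    have hα3 : 3 - β ≤ α := by nlinarith
    have hISH : eISH α β γ ≤ (1 + β) / 2 := by unfold eISH; nlinarith
    rw [max_eq_right hISH, max_eq_left (max_le (by linarith) (by linarith))]
end

section
/- (Theorem 1, minimum required backhaul rate in Regime B, exponent form.) Let β, γ be real numbers with β, γ ∈ [0,1), β + 2γ ≤ 1, and β + γ > 1/2, and let η ∈ ℝ. Then E(α,β,γ,η) = E∞(α,β,γ) holds for every α > 2 if and only if η ≥ γ. That is, the minimum backhaul-rate exponent required to achieve the infinite-backhaul throughput scaling exponent in Regime B is exactly γ (each backhaul link must support rate Ω(l) = Ω(n^γ)). -/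
/-- Theorem 1, Regime B: the minimum backhaul-rate exponent required to achieve the
infinite-backhaul throughput scaling exponent is exactly `γ`. -/
theorem minimum_backhaul_rate_regimeB (β γ η : ℝ)
    (hβ : β ∈ Set.Ico (0 : ℝ) 1) (hγ : γ ∈ Set.Ico (0 : ℝ) 1)
    (h1 : β + 2 * γ ≤ 1) (h2 : 1 / 2 < β + γ) :
    (∀ α : ℝ, 2 < α → Eexp α β γ η = Einf α β γ) ↔ γ ≤ η := by
  obtain ⟨hβ0, hβ1⟩ := hβ
  obtain ⟨hγ0, hγ1⟩ := hγ
  have himh : eIMH β γ = β + γ := by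
    unfold eIMH; rw [min_eq_left]; linarith
  constructor
  · intro h
    have h4 := h 4 (by norm_num)
    unfold Eexp Einf eISH at h4
    rw [himh] at h4
    have hish : 1 + γ - 4 * (1 - β) / 2 ≤ β + γ := by linarith
    rw [max_eq_right hish] at h4
    have hm : max (1 / 2 : ℝ) (2 - 4 / 2) = 1 / 2 := by norm_num
    rw [hm] at h4
    rw [max_eq_left (le_of_lt h2)] at h4
    by_contra hlt
    push_neg at hlt
    rw [min_eq_right (by linarith : β + η ≤ β + γ)] at h4
    have : max (β + η) (1 / 2 : ℝ) < β + γ := max_lt (by linarith) h2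
    linarith [h4 ▸ this]
  · intro hη α hα
    have hish : eISH α β γ ≤ β + γ := by
      unfold eISH
      nlinarith [mul_nonneg (by linarith : (0:ℝ) ≤ α - 2) (by linarith : (0:ℝ) ≤ 1 - β)]
    unfold Eexp Einf
    rw [himh, max_eq_right hish, min_eq_left (by linarith)]
end

section
/- (Theorem 1, minimum required backhaul rate in Regime C, exponent form.) Let β, γ be real numbers with β ∈ (0,1), γ ∈ [0,1), β + 2γ ≥ 1, and 2γ ≤ β² − 3β + 2, and let η ∈ ℝ. Then E(α,β,γ,η) = E∞(α,β,γ) holds for every α > 2 if and only if η ≥ (1−β)/2. That is, the minimum backhaul-rate exponent required to achieve the infinite-backhaul throughput scaling exponent in Regime C is exactly (1−β)/2 (each backhaul link must support rate Ω((n/m)^{1/2})). -/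
/-!
`E = E∞` exactly when the infrastructure exponent `max e_ISH e_IMH` is dominated by the backhaul
cap `β + η` or by the cap-free exponents. In Regime C, `e_IMH = (1 + β)/2`, and whenever `e_ISH`
exceeds it, hierarchical cooperation already does at least as well as `e_ISH`. So the condition
reduces to `(1 + β)/2 ≤ max (β + η) (2 - α/2)`, which holds for all `α > 2` iff
`(1 + β)/2 ≤ β + η`: for large `α` the hierarchical term drops below `1/2`.
-/

theorem max_min_eq_max_iff {α : Type*} [LinearOrder α] {x y z : α} :
    max (min x y) z = max x z ↔ x ≤ max y z := by
  constructor
  · intro h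
    by_contra! hx
    obtain ⟨hyx, hzx⟩ := max_lt_iff.mp hx
    rw [min_eq_right hyx.le, max_eq_left hzx.le] at h
    exact hx.ne h
  · intro hx
    rcases le_max_iff.mp hx with hxy | hxz
    · rw [min_eq_left hxy]
    · rw [max_eq_right ((min_le_left x y).trans hxz), max_eq_right hxz]

theorem Eexp_eq_Einf_iff {α β γ η : ℝ} :
    Eexp α β γ η = Einf α β γ ↔
      max (eISH α β γ) (eIMH β γ) ≤ max (β + η) (max (1 / 2) (2 - α / 2)) :=
  max_min_eq_max_iff

theorem eIMH_eq_of_one_le {β γ : ℝ} (h : 1 ≤ β + 2 * γ) : eIMH β γ = (1 + β) / 2 :=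
  min_eq_right (by linarith)

theorem eISH_le_max_IMH_HC {β γ : ℝ} (hβ : β ∈ Set.Ioo (0 : ℝ) 1)
    (h2 : 2 * γ ≤ β ^ 2 - 3 * β + 2) (α : ℝ) :
    eISH α β γ ≤ max ((1 + β) / 2) (2 - α / 2) := by
  obtain ⟨hβ0, hβ1⟩ := hβ
  rcases le_or_gt (eISH α β γ) ((1 + β) / 2) with hle | hgt
  · exact le_max_of_le_left hle
  · apply le_max_of_le_right
    unfold eISH at hgt ⊢
    -- `e_ISH > (1 + β)/2` forces `α < 3 - β`, where `αβ + 2γ < (3 - β)β + (1 - β)(2 - β) = 2`.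
    have hα : α < 3 - β := by
      have : (α - 1) * (1 - β) < (2 - β) * (1 - β) := by nlinarith
      nlinarith
    nlinarith [mul_lt_mul_of_pos_left hα hβ0]

theorem minimum_backhaul_rate_regimeC_general (β γ η : ℝ)
    (hβ : β ∈ Set.Ioo (0 : ℝ) 1)
    (h1 : 1 ≤ β + 2 * γ) (h2 : 2 * γ ≤ β ^ 2 - 3 * β + 2) :
    (∀ α : ℝ, 2 < α → Eexp α β γ η = Einf α β γ) ↔ (1 - β) / 2 ≤ η := by
  simp only [Eexp_eq_Einf_iff, eIMH_eq_of_one_le h1]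
  constructor
  · intro h
    have hIMH := (le_max_right _ _).trans (h 4 (by norm_num))
    by_contra! hη
    refine hIMH.not_gt (max_lt (by linarith) (max_lt ?_ ?_)) <;> linarith [hβ.1]
  · intro hη α _
    have hcap : (1 + β) / 2 ≤ β + η := by linarith
    exact max_le
      ((eISH_le_max_IMH_HC hβ h2 α).trans (max_le_max hcap (le_max_right _ _)))
      (le_max_of_le_left hcap)

/-- Theorem 1, Regime C: the minimum backhaul-rate exponent required to achieve the
infinite-backhaul throughput scaling exponent is exactly `(1 - β) / 2`. -/
theorem minimum_backhaul_rate_regimeC (β γ η : ℝ)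
    (hβ : β ∈ Set.Ioo (0 : ℝ) 1) (hγ : γ ∈ Set.Ico (0 : ℝ) 1)
    (h1 : 1 ≤ β + 2 * γ) (h2 : 2 * γ ≤ β ^ 2 - 3 * β + 2) :
    (∀ α : ℝ, 2 < α → Eexp α β γ η = Einf α β γ) ↔ (1 - β) / 2 ≤ η :=
  minimum_backhaul_rate_regimeC_general β γ η hβ h1 h2
end

section
/- (Theorem 1, minimum required backhaul rate in Regime D, exponent form.) Let β, γ be real numbers with β ∈ (0,1), γ ∈ [0,1), β + γ ≤ 1, and 2γ ≥ β² − 3β + 2, and let η ∈ ℝ. Then E(α,β,γ,η) = E∞(α,β,γ) holds for every α > 2 if and only if η ≥ 2 − β − (1−γ)/β. That is, the minimum backhaul-rate exponent required to achieve the infinite-backhaul throughput scaling exponent in Regime D is exactly 2 − β − (1−γ)/β, which is the exponent of l·(m/n)^{(1−γ)/β − 1} when m = n^β and l = n^γ. -/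
/-- Theorem 1, Regime D: the minimum backhaul-rate exponent required to achieve the
infinite-backhaul throughput scaling exponent is exactly `2 - β - (1 - γ) / β`. -/
theorem minimum_backhaul_rate_regimeD (β γ η : ℝ)
    (hβ : β ∈ Set.Ioo (0 : ℝ) 1) (hγ : γ ∈ Set.Ico (0 : ℝ) 1)
    (h1 : β + γ ≤ 1) (h2 : β ^ 2 - 3 * β + 2 ≤ 2 * γ) :
    (∀ α : ℝ, 2 < α → Eexp α β γ η = Einf α β γ) ↔ 2 - β - (1 - γ) / β ≤ η := by
  obtain ⟨hβ0, hβ1⟩ := hβ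
  obtain ⟨hγ0, hγ1⟩ := hγ
  have hβne : β ≠ 0 := ne_of_gt hβ0
  set T : ℝ := 2 - (1 - γ) / β with hTdef
  clear_value T
  have hTb : (1 + β) / 2 ≤ T := by
    have h := (div_le_iff₀ hβ0).mpr (by nlinarith : 1 - γ ≤ (2 - (1 + β) / 2) * β)
    rw [hTdef]; linarith
  have hThalf : (1 : ℝ) / 2 < T := by linarith
  have hIMHT : eIMH β γ ≤ T := le_trans (min_le_right _ _) hTb
  have key : ∀ α : ℝ, 2 - α / 2 < eISH α β γ → eISH α β γ ≤ T := by
    intro α h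
    simp only [eISH] at h ⊢
    have hαβ : 1 - γ < α * β / 2 := by linarith
    have hd : (1 - γ) / β * β = 1 - γ := div_mul_cancel₀ _ hβne
    have hq : (1 - γ) / β < α / 2 := by nlinarith
    rw [hTdef]
    nlinarith [mul_nonneg (le_of_lt (by linarith : (0:ℝ) < α / 2 - (1 - γ) / β))
      (by linarith : (0:ℝ) ≤ 1 - β)]
  constructor
  · intro H
    by_contra hc
    push_neg at hc
    set M : ℝ := max (β + η) (1 / 2) with hM
    have hMT : M < T := max_lt (by rw [hTdef]; linarith) hThalf
    set ε : ℝ := (T - M) / (1 - β) with hε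
    have hε0 : 0 < ε := div_pos (by linarith) (by linarith)
    set α0 : ℝ := 2 * (1 - γ) / β + ε with hα0
    clear_value M ε α0
    have hαstar : 2 ≤ 2 * (1 - γ) / β := by
      rw [le_div_iff₀ hβ0]; linarith
    have hα2 : 2 < α0 := by rw [hα0]; linarith
    have h1β : (1 : ℝ) - β ≠ 0 := by linarith
    have he : eISH α0 β γ = (T + M) / 2 := by
      simp only [eISH, hα0, hε, hTdef]
      field_simp
      ring
    have hMe : M < eISH α0 β γ := by rw [he]; linarith [hMT]
    have hB : 2 - α0 / 2 < eISH α0 β γ := by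
      simp only [eISH, hα0]
      have hsb : 2 * (1 - γ) / β * β = 2 * (1 - γ) := div_mul_cancel₀ _ hβne
      nlinarith [mul_pos hε0 hβ0]
    have hEq := H α0 hα2
    have hup : eISH α0 β γ ≤ Einf α0 β γ := le_max_of_le_left (le_max_left _ _)
    have hdown : Eexp α0 β γ η < eISH α0 β γ := by
      apply max_lt
      · exact lt_of_le_of_lt (min_le_right _ _)
          (lt_of_le_of_lt (le_max_left (β + η) (1 / 2)) (hM ▸ hMe))
      · apply max_lt
        · exact lt_of_le_of_lt (le_max_right (β + η) (1 / 2)) (hM ▸ hMe)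
        · exact hB
    linarith [hEq ▸ hdown]
  · intro hη α hα
    have hbη : T ≤ β + η := by rw [hTdef]; linarith
    apply le_antisymm
    · exact max_le_max (min_le_left _ _) le_rfl
    · apply max_le _ (le_max_right _ _)
      apply max_le
      · by_cases h : eISH α β γ ≤ 2 - α / 2
        · exact le_max_of_le_right (le_max_of_le_right h)
        · push_neg at h
          exact le_max_of_le_left (le_min (le_max_left _ _) (le_trans (key α h) hbη))
      · exact le_max_of_le_left (le_min (le_max_right _ _) (le_trans hIMHT hbη))
end

section
/- (Appendix A, few BS antennas: infrastructure is useless for every backhaul rate.) Let α, β, γ, η be real numbers with α > 2, β, γ ∈ [0,1), and β + γ ≤ 1/2. Then for every η ∈ ℝ, E(α,β,γ,η) = max(1/2, 2 − α/2); that is, when the total number of BS antennas satisfies β + γ ≤ 1/2, no infrastructure-supported protocol improves the throughput scaling exponent of the pure ad hoc network regardless of the backhaul link rate. -/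
/-- Appendix A: when `β + γ ≤ 1/2`, no infrastructure-supported protocol improves the
throughput scaling exponent of the pure ad hoc network, regardless of the backhaul rate. -/
theorem infrastructure_useless_few_antennas (α β γ : ℝ) (hα : 2 < α)
    (hβ : β ∈ Set.Ico (0 : ℝ) 1) (hγ : γ ∈ Set.Ico (0 : ℝ) 1)
    (hβγ : β + γ ≤ 1 / 2) :
    ∀ η : ℝ, Eexp α β γ η = max (1 / 2) (2 - α / 2) := by
  intro η
  have hb := hβ.1; have hb1 := hβ.2; have hg := hγ.1
  have hISH : eISH α β γ ≤ 1/2 := by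
    have : α * (1 - β) ≥ 2 * (1 - β) := by nlinarith
    unfold eISH; nlinarith
  have hIMH : eIMH β γ ≤ 1/2 := le_trans (min_le_left _ _) hβγ
  unfold Eexp
  apply max_eq_right
  calc min (max (eISH α β γ) (eIMH β γ)) (β + η) ≤ max (eISH α β γ) (eIMH β γ) := min_le_left _ _
    _ ≤ 1/2 := max_le hISH hIMH
    _ ≤ max (1/2) (2 - α/2) := le_max_left _ _
end

section
/- (Table II, infrastructure-limited Regime B̃.) Let α, β, γ, η be real numbers with α > 2, β, γ ∈ [0,1), β + γ ≤ 1, η ≤ γ, β ≤ 1 − 2η, and β + η ≥ 1/2. Then E(α,β,γ,η) = max(β + η, 2 − α/2); in particular E(α,β,γ,η) = 2 − α/2 when 2 < α < 4 − 2β − 2η (hierarchical cooperation is best) and E(α,β,γ,η) = β + η when α ≥ 4 − 2β − 2η (the infrastructure-supported multihop protocol, limited by the backhaul transmission rate, is best). -/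
/-- Table II, infrastructure-limited Regime B̃. -/
theorem regimeBtilde_finite_backhaul (α β γ η : ℝ) (hα : 2 < α)
    (hβ : β ∈ Set.Ico (0 : ℝ) 1) (hγ : γ ∈ Set.Ico (0 : ℝ) 1)
    (hβγ : β + γ ≤ 1) (hηγ : η ≤ γ) (hβη : β ≤ 1 - 2 * η)
    (h12 : 1 / 2 ≤ β + η) :
    Eexp α β γ η = max (β + η) (2 - α / 2) ∧
    (α < 4 - 2 * β - 2 * η → Eexp α β γ η = 2 - α / 2) ∧
    (4 - 2 * β - 2 * η ≤ α → Eexp α β γ η = β + η) := by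
  have hIMH : β + η ≤ eIMH β γ := le_min (by linarith) (by linarith)
  have hmin : min (max (eISH α β γ) (eIMH β γ)) (β + η) = β + η :=
    min_eq_right (le_max_of_le_right hIMH)
  have hE : Eexp α β γ η = max (β + η) (2 - α / 2) := by
    unfold Eexp
    rw [hmin, max_comm (1/2 : ℝ), ← max_assoc, max_eq_left (le_max_of_le_left h12)]
  refine ⟨hE, ?_, ?_⟩
  · intro h; rw [hE, max_eq_right (by linarith)]
  · intro h; rw [hE, max_eq_left (by linarith)]
end

section
/- (Table II, infrastructure-limited Regime D̃.) Let α, β, γ, η be real numbers with α > 2, β ∈ [0,1), γ ∈ [0,1), β + γ ≤ 1, β ≥ 1 − 2η, and γ ≥ β² + (η−2)β + 1. Then: (i) if α ≤ 4 − 2β − 2η, then E(α,β,γ,η) = 2 − α/2 (hierarchical cooperation is best); (ii) if 4 − 2β − 2η ≤ α ≤ 2 + 2(γ−η)/(1−β), then E(α,β,γ,η) = β + η (the infrastructure-supported single-hop protocol, limited by the backhaul transmission rate, is best); (iii) if 2 + 2(γ−η)/(1−β) ≤ α ≤ 1 + 2γ/(1−β), then E(α,β,γ,η) = 1 + γ −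 α(1−β)/2 (infrastructure-supported single-hop, unconstrained by backhaul, is best); (iv) if α ≥ 1 + 2γ/(1−β), then E(α,β,γ,η) = (1+β)/2 (infrastructure-supported multihop is best). -/
set_option maxHeartbeats 1000000 in
/-- Table II, infrastructure-limited Regime D̃. -/
theorem regimeDtilde_finite_backhaul (α β γ η : ℝ) (hα : 2 < α)
    (hβ : β ∈ Set.Ico (0 : ℝ) 1) (hγ : γ ∈ Set.Ico (0 : ℝ) 1)
    (hβγ : β + γ ≤ 1) (hβη : 1 - 2 * η ≤ β)
    (hγη : β ^ 2 + (η - 2) * β + 1 ≤ γ) :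
    (α ≤ 4 - 2 * β - 2 * η → Eexp α β γ η = 2 - α / 2) ∧
    (4 - 2 * β - 2 * η ≤ α → α ≤ 2 + 2 * (γ - η) / (1 - β) → Eexp α β γ η = β + η) ∧
    (2 + 2 * (γ - η) / (1 - β) ≤ α → α ≤ 1 + 2 * γ / (1 - β) →
      Eexp α β γ η = 1 + γ - α * (1 - β) / 2) ∧
    (1 + 2 * γ / (1 - β) ≤ α → Eexp α β γ η = (1 + β) / 2) := by
  obtain ⟨hβ0, hβ1⟩ := hβ
  obtain ⟨hγ0, hγ1⟩ := hγ
  have hb : (0:ℝ) < 1 - β := by linarith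
  have hβpos : 0 < β := by
    by_contra hc
    push_neg at hc
    have hb0 : β = 0 := le_antisymm hc hβ0
    rw [hb0] at hγη
    nlinarith
  have hη : (1 - β) / 2 ≤ η := by linarith
  have hγb : γ ≤ 1 - β := by linarith
  have hγ2 : (1 - β) ^ 2 + η * β ≤ γ := by nlinarith [hγη]
  have hβη2 : (1 + β) / 2 ≤ β + η := by linarith
  have hIMH : eIMH β γ = (1 + β) / 2 := by
    unfold eIMH
    rw [min_eq_right]
    nlinarith [mul_nonneg (sub_nonneg.mpr hη) hβpos.le]
  refine ⟨?_, ?_, ?_, ?_⟩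
  · -- Regime (i): hierarchical cooperation
    intro h
    apply le_antisymm
    · apply max_le
      · exact le_trans (min_le_right _ _) (by linarith)
      · exact max_le (by linarith) le_rfl
    · exact le_max_of_le_right (le_max_right _ _)
  · -- Regime (ii): backhaul-limited
    intro h1 h2
    have h2' : (α - 2) * (1 - β) ≤ 2 * (γ - η) := by
      have h2'' : α - 2 ≤ 2 * (γ - η) / (1 - β) := by linarith
      exact (le_div_iff₀ hb).mp h2''
    have hISHge : β + η ≤ eISH α β γ := by
      unfold eISH; nlinarith
    apply le_antisymm
    · apply max_le
      · exact min_le_right _ _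
      · exact max_le (by linarith) (by linarith)
    · exact le_max_of_le_left (le_min (le_trans hISHge (le_max_left _ _)) le_rfl)
  · -- Regime (iii): ISH unconstrained
    intro h1 h2
    have h1' : 2 * (γ - η) ≤ (α - 2) * (1 - β) := by
      have h1'' : 2 * (γ - η) / (1 - β) ≤ α - 2 := by linarith
      exact (div_le_iff₀ hb).mp h1''
    have h2' : (α - 1) * (1 - β) ≤ 2 * γ := by
      have h2'' : α - 1 ≤ 2 * γ / (1 - β) := by linarith
      exact (le_div_iff₀ hb).mp h2''
    have key : (2 + 2 * (γ - η) / (1 - β)) * β * (1 - β) = 2 * β * (1 - β) + 2 * (γ - η) * β := by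
      field_simp
    have hkey : 2 * β * (1 - β) + 2 * (γ - η) * β ≤ α * β * (1 - β) := by
      have := mul_le_mul_of_nonneg_right (mul_le_mul_of_nonneg_right h1 hβpos.le) hb.le
      linarith [key ▸ this]
    have hISHle : eISH α β γ ≤ β + η := by unfold eISH; nlinarith
    have hISHgeIMH : (1 + β) / 2 ≤ eISH α β γ := by unfold eISH; nlinarith
    have hISHhc : 2 - α / 2 ≤ eISH α β γ := by
      unfold eISH
      nlinarith [hkey, hγ2, hb]
    have hE : eISH α β γ = 1 + γ - α * (1 - β) / 2 := rfl
    rw [← hE]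
    apply le_antisymm
    · apply max_le
      · refine le_trans (min_le_left _ _) (max_le le_rfl ?_)
        rw [hIMH]; exact hISHgeIMH
      · exact max_le (by linarith) hISHhc
    · exact le_max_of_le_left (le_min (le_max_left _ _) hISHle)
  · -- Regime (iv): IMH
    intro h
    have h' : 2 * γ ≤ (α - 1) * (1 - β) := by
      have h'' : 2 * γ / (1 - β) ≤ α - 1 := by linarith
      exact (div_le_iff₀ hb).mp h''
    have hISHle : eISH α β γ ≤ (1 + β) / 2 := by unfold eISH; nlinarith
    have hα3 : 3 - β ≤ α := by
      have h2b : (2 - β) * (1 - β) ≤ (α - 1) * (1 - β) := by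
        nlinarith [mul_nonneg (sub_nonneg.mpr hη) hβpos.le]
      linarith [le_of_mul_le_mul_right h2b hb]
    apply le_antisymm
    · apply max_le
      · refine le_trans (min_le_left _ _) (max_le hISHle ?_)
        rw [hIMH]
      · exact max_le (by linarith) (by linarith)
    · refine le_max_of_le_left (le_min ?_ hβη2)
      rw [← hIMH]
      exact le_max_right _ _
end
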